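/- arXiv:1705.03099 — 2 statements merged into one kernel-verified Lean document; each statement's English description precedes it below -/
import Mathlib

section
/- For every s > 0 one has the strict sandwich U(s) < Z(s) < U(s) + c²·γ/(4·W_e). -/
/-!
With `κ = 4 s W_e / c²` and `β = s γ²` one has `s g(r) = κ r^{-γ} + β r^{-γ-2}`, hence
`1 - e^{-s g} = (1 - e^{-κ r^{-γ}}) + e^{-κ r^{-γ}} (1 - e^{-β r^{-γ-2}})`, so `Z(s) - U(s)` is the
integral of the positive excess `e^{-κ r^{-γ}} (1 - e^{-β r^{-γ-2}}) r`. Since `1 - e^{-x} < x`,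
the excess lies strictly below `β e^{-κ r^{-γ}} r^{-γ-1}`, whose integral is
`β / (γ κ) = c² γ / (4 W_e)` by the substitution `u = r^{-γ}`.
-/

open MeasureTheory Real Set

theorem one_sub_exp_neg_pos {x : ℝ} (hx : 0 < x) : 0 < 1 - exp (-x) :=
  sub_pos.2 (exp_lt_one_iff.2 (neg_lt_zero.2 hx))

theorem one_sub_exp_neg_lt_self {x : ℝ} (hx : x ≠ 0) : 1 - exp (-x) < x := by
  linarith [one_sub_lt_exp_neg hx]

section

variable {X : Type*} [MeasurableSpace X] {μ : Measure X} {s : Set X} {f g : X → ℝ}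

theorem setIntegral_pos_of_forall_pos (hs : MeasurableSet s) (hμs : μ s ≠ 0)
    (hf : IntegrableOn f s μ) (hpos : ∀ x ∈ s, 0 < f x) : 0 < ∫ x in s, f x ∂μ := by
  rw [setIntegral_pos_iff_support_of_nonneg_ae
    ((ae_restrict_mem hs).mono fun x hx ↦ (hpos x hx).le) hf,
    inter_eq_right.2 fun x hx ↦ Function.mem_support.2 (hpos x hx).ne']
  exact pos_iff_ne_zero.2 hμs

theorem setIntegral_lt_setIntegral_of_forall_lt (hs : MeasurableSet s) (hμs : μ s ≠ 0)
    (hf : IntegrableOn f s μ) (hg : IntegrableOn g s μ) (hlt : ∀ x ∈ s, f x < g x) :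
    ∫ x in s, f x ∂μ < ∫ x in s, g x ∂μ := by
  have := setIntegral_pos_of_forall_pos hs hμs (hg.sub hf) fun x hx ↦ sub_pos.2 (hlt x hx)
  rwa [integral_sub' hg hf, sub_pos] at this

end

section

variable {κ β p : ℝ}

theorem integral_exp_neg_mul_rpow_neg_mul_rpow (hκ : 0 < κ) (hp : 0 < p) :
    ∫ r in Ioi 0, exp (-(κ * r ^ (-p))) * r ^ (-p - 1) = (p * κ)⁻¹ := by
  have hsubst := integral_comp_rpow_Ioi (fun u ↦ exp ((-κ) * u)) (neg_ne_zero.2 hp.ne')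
  rw [integral_exp_mul_Ioi (neg_neg_of_pos hκ), mul_zero, exp_zero] at hsubst
  calc ∫ r in Ioi 0, exp (-(κ * r ^ (-p))) * r ^ (-p - 1)
      = p⁻¹ * ∫ r in Ioi 0, (|-p| * r ^ (-p - 1)) • exp ((-κ) * r ^ (-p)) := by
        rw [← integral_const_mul]
        refine integral_congr_ae (ae_of_all _ fun r ↦ ?_)
        simp only [abs_neg, abs_of_pos hp, smul_eq_mul, neg_mul]
        field_simp
    _ = (p * κ)⁻¹ := by rw [hsubst]; field_simp

theorem integrableOn_exp_neg_mul_rpow_neg_mul_rpow (hκ : 0 < κ) (hp : 0 < p) :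
    IntegrableOn (fun r ↦ exp (-(κ * r ^ (-p))) * r ^ (-p - 1)) (Ioi 0) :=
  Integrable.of_integral_ne_zero <| by
    rw [integral_exp_neg_mul_rpow_neg_mul_rpow hκ hp]; positivity

theorem integrableOn_one_sub_exp_neg_mul_rpow_neg_mul_self (hκ : 0 ≤ κ) (hp : 2 < p) :
    IntegrableOn (fun r ↦ (1 - exp (-(κ * r ^ (-p)))) * r) (Ioi 0) := by
  have hmeas : AEStronglyMeasurable (fun r : ℝ ↦ (1 - exp (-(κ * r ^ (-p)))) * r) :=
    (by fun_prop : Measurable _).aestronglyMeasurable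
  have hbound : ∀ r > 0, 0 ≤ 1 - exp (-(κ * r ^ (-p))) ∧
      1 - exp (-(κ * r ^ (-p))) ≤ min 1 (κ * r ^ (-p)) := by
    intro r hr
    have : 0 ≤ κ * r ^ (-p) := by positivity
    refine ⟨sub_nonneg.2 (exp_le_one_iff.2 (by linarith)), le_min ?_ ?_⟩
    · linarith [exp_pos (-(κ * r ^ (-p)))]
    · linarith [one_sub_le_exp_neg (κ * r ^ (-p))]
  rw [← Ioc_union_Ioi_eq_Ioi zero_le_one]
  refine IntegrableOn.union ?_ ?_
  · refine Integrable.mono' (integrableOn_const (C := (1 : ℝ)) measure_Ioc_lt_top.ne)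
      hmeas.restrict ?_
    filter_upwards [ae_restrict_mem measurableSet_Ioc] with r ⟨hr0, hr1⟩
    obtain ⟨h0, h1⟩ := hbound r hr0
    rw [norm_mul, norm_of_nonneg h0, norm_of_nonneg hr0.le]
    exact mul_le_one₀ (h1.trans (min_le_left _ _)) hr0.le hr1
  · refine Integrable.mono'
      ((integrableOn_Ioi_rpow_of_lt (by linarith : -p + 1 < -1) one_pos).const_mul κ)
      hmeas.restrict ?_
    filter_upwards [ae_restrict_mem measurableSet_Ioi] with r hr
    have hr0 : 0 < r := one_pos.trans hr
    obtain ⟨h0, h1⟩ := hbound r hr0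
    rw [norm_mul, norm_of_nonneg h0, norm_of_nonneg hr0.le, rpow_add hr0, rpow_one,
      ← mul_assoc]
    exact mul_le_mul_of_nonneg_right (h1.trans (min_le_right _ _)) hr0.le

end

theorem one_sub_exp_neg_add (a b : ℝ) :
    1 - exp (-(a + b)) = 1 - exp (-a) + exp (-a) * (1 - exp (-b)) := by
  rw [neg_add, exp_add]; ring

noncomputable def excessIntegrand (κ β p r : ℝ) : ℝ :=
  exp (-(κ * r ^ (-p))) * (1 - exp (-(β * r ^ (-p - 2)))) * r

section

variable {κ β p r : ℝ}

theorem excessIntegrand_pos (hβ : 0 < β) (hr : 0 < r) : 0 < excessIntegrand κ β p r := by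
  unfold excessIntegrand
  have := one_sub_exp_neg_pos (by positivity : 0 < β * r ^ (-p - 2))
  positivity

theorem excessIntegrand_lt (hβ : 0 < β) (hr : 0 < r) :
    excessIntegrand κ β p r < β * (exp (-(κ * r ^ (-p))) * r ^ (-p - 1)) := by
  have hlt := one_sub_exp_neg_lt_self (by positivity : β * r ^ (-p - 2) ≠ 0)
  calc excessIntegrand κ β p r
      < exp (-(κ * r ^ (-p))) * (β * r ^ (-p - 2)) * r := by unfold excessIntegrand; gcongr
    _ = β * (exp (-(κ * r ^ (-p))) * r ^ (-p - 1)) := by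
        rw [show -p - 1 = -p - 2 + 1 by ring, rpow_add_one hr.ne']; ring

theorem integrableOn_excessIntegrand (hκ : 0 < κ) (hβ : 0 < β) (hp : 0 < p) :
    IntegrableOn (excessIntegrand κ β p) (Ioi 0) := by
  refine ((integrableOn_exp_neg_mul_rpow_neg_mul_rpow hκ hp).const_mul β).mono'
    (by unfold excessIntegrand; fun_prop : Measurable _).aestronglyMeasurable ?_
  filter_upwards [ae_restrict_mem measurableSet_Ioi] with r hr
  rw [norm_of_nonneg (excessIntegrand_pos hβ hr).le]
  exact (excessIntegrand_lt hβ hr).le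

theorem integral_excessIntegrand_pos (hκ : 0 < κ) (hβ : 0 < β) (hp : 0 < p) :
    0 < ∫ r in Ioi 0, excessIntegrand κ β p r :=
  setIntegral_pos_of_forall_pos measurableSet_Ioi (by simp)
    (integrableOn_excessIntegrand hκ hβ hp) fun _ hr ↦ excessIntegrand_pos hβ hr

theorem integral_excessIntegrand_lt (hκ : 0 < κ) (hβ : 0 < β) (hp : 0 < p) :
    ∫ r in Ioi 0, excessIntegrand κ β p r < β * (p * κ)⁻¹ := by
  rw [← integral_exp_neg_mul_rpow_neg_mul_rpow hκ hp, ← integral_const_mul]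
  exact setIntegral_lt_setIntegral_of_forall_lt measurableSet_Ioi (by simp)
    (integrableOn_excessIntegrand hκ hβ hp)
    ((integrableOn_exp_neg_mul_rpow_neg_mul_rpow hκ hp).const_mul β)
    fun _ hr ↦ excessIntegrand_lt hβ hr

end

/-- With `g(r) = r^{−γ−2}·(γ² + 4·W_e·r²/c²)`,
`Z(s) = ∫₀^∞ (1 − exp(−s·g(r)))·r dr` and
`U(s) = ∫₀^∞ (1 − exp(−4·s·W_e·r^{−γ}/c²))·r dr`, for every `s > 0` the strict sandwich
`U(s) < Z(s) < U(s) + c²·γ/(4·W_e)` holds. -/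
theorem Z_sandwich_wideband (γ We c : ℝ) (hγ : 2 < γ) (hWe : 0 < We) (hc : 0 < c)
    (g Z U : ℝ → ℝ)
    (hg : ∀ r > 0, g r = r ^ (-γ - 2) * (γ ^ 2 + 4 * We * r ^ 2 / c ^ 2))
    (hZ : ∀ s > 0, Z s = ∫ r in Set.Ioi (0 : ℝ), (1 - Real.exp (-s * g r)) * r)
    (hU : ∀ s > 0, U s = ∫ r in Set.Ioi (0 : ℝ),
      (1 - Real.exp (-(4 * s * We * r ^ (-γ) / c ^ 2))) * r)
    (s : ℝ) (hs : 0 < s) :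
    U s < Z s ∧ Z s < U s + c ^ 2 * γ / (4 * We) := by
  set κ := 4 * s * We / c ^ 2
  set β := s * γ ^ 2
  have hκ : 0 < κ := by positivity
  have hβ : 0 < β := by positivity
  have hγ0 : 0 < γ := by linarith
  have hsg : ∀ r > 0, s * g r = κ * r ^ (-γ) + β * r ^ (-γ - 2) := by
    intro r hr
    have : r ^ (-γ) = r ^ (-γ - 2) * r ^ 2 := by
      rw [← rpow_natCast, ← rpow_add hr]; norm_num
    rw [hg r hr, this]; ring
  have hU_κ : U s = ∫ r in Ioi 0, (1 - exp (-(κ * r ^ (-γ)))) * r := by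
    rw [hU s hs]; congr! 5; ring
  have hZU : Z s = U s + ∫ r in Ioi 0, excessIntegrand κ β γ r := by
    rw [hZ s hs, hU_κ, ← integral_add
      (integrableOn_one_sub_exp_neg_mul_rpow_neg_mul_self hκ.le hγ)
      (integrableOn_excessIntegrand hκ hβ hγ0)]
    refine setIntegral_congr_fun measurableSet_Ioi fun r hr ↦ ?_
    rw [neg_mul, hsg r hr, one_sub_exp_neg_add, excessIntegrand]; ring
  have hβκ : β * (γ * κ)⁻¹ = c ^ 2 * γ / (4 * We) := by simp only [β, κ]; field_simp
  rw [hZU]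
  exact ⟨lt_add_of_pos_right _ (integral_excessIntegrand_pos hκ hβ hγ0),
    by linarith [integral_excessIntegrand_lt hκ hβ hγ0]⟩
end

section
/- The integral (4/ρ)·∫₀^∞ exp(−2πλ·U(s)) ds converges and equals CRB_LB,W = (c²/(ρ·W_e))·(πλ)^{−γ/2}·Γ(1 − 2/γ)^{−γ/2}·Γ(1 + γ/2). -/
/-!
The inner integral is a Mellin-type integral: integrating by parts against `r ^ 2 / 2` (the boundary
terms vanish because `0 ≤ 1 - exp (-t) ≤ min 1 t`) and substituting `r ↦ r⁻¹` turns it into a Gamma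
integral, so `U s = Γ(1 - 2/γ) / 2 · (4 W_e s / c²) ^ (2/γ)`. The outer integrand is then
`exp (-b s ^ (2/γ))`, another Gamma integral, equal to `b ^ (-γ/2) Γ(1 + γ/2)`.
-/

open MeasureTheory Real
open Set Filter Topology

theorem one_sub_exp_neg_nonneg {t : ℝ} (ht : 0 ≤ t) : 0 ≤ 1 - exp (-t) := by
  linarith [exp_le_one_iff.mpr (neg_nonpos.mpr ht)]

theorem one_sub_exp_neg_le_min (t : ℝ) : 1 - exp (-t) ≤ min 1 t :=
  le_min (by linarith [exp_pos (-t)]) (by linarith [add_one_le_exp (-t)])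

theorem integrableOn_and_integral_rpow_mul_exp_neg_mul_rpow_neg {p q a : ℝ} (hp : 0 < p)
    (hq : q < -1) (ha : 0 < a) :
    IntegrableOn (fun x : ℝ => x ^ q * exp (-(a * x ^ (-p)))) (Ioi 0) ∧
    ∫ x in Ioi (0 : ℝ), x ^ q * exp (-(a * x ^ (-p)))
      = a ^ ((q + 1) / p) * (1 / p) * Gamma (-(q + 1) / p) := by
  set f : ℝ → ℝ := fun y => y ^ (-q - 2) * exp (-a * y ^ p)
  have hsubst : ∀ x ∈ Ioi (0 : ℝ),
      (|(-1 : ℝ)| * x ^ ((-1 : ℝ) - 1)) • f (x ^ (-1 : ℝ)) = x ^ q * exp (-(a * x ^ (-p))) := by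
    intro x (hx : 0 < x)
    simp only [f, smul_eq_mul, abs_neg, abs_one, one_mul, ← rpow_mul hx.le, ← mul_assoc,
      ← rpow_add hx, neg_mul]
    ring_nf
  have hf := integrableOn_rpow_mul_exp_neg_mul_rpow (s := -q - 2) (by linarith) hp ha
  refine ⟨((integrableOn_Ioi_comp_rpow_iff f (by norm_num)).mpr hf).congr_fun hsubst
    measurableSet_Ioi, ?_⟩
  rw [← setIntegral_congr_fun measurableSet_Ioi hsubst, integral_comp_rpow_Ioi f (by norm_num),
    integral_rpow_mul_exp_neg_mul_rpow hp (by linarith) ha]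
  ring_nf

section
variable {γ a : ℝ}

theorem hasDerivAt_one_sub_exp_neg_mul_rpow_neg {r : ℝ} (hr : 0 < r) :
    HasDerivAt (fun r : ℝ => 1 - exp (-(a * r ^ (-γ))))
      (-(a * γ * r ^ (-γ - 1) * exp (-(a * r ^ (-γ))))) r := by
  refine ((((hasDerivAt_rpow_const (p := -γ) (Or.inl hr.ne')).const_mul a).neg).exp.const_sub
    1).congr_deriv ?_
  simp only [Pi.neg_apply]
  ring

theorem integrableOn_one_sub_exp_neg_mul_rpow_neg_mul_self_s4 (hγ : 2 < γ) (ha : 0 ≤ a) :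
    IntegrableOn (fun r : ℝ => (1 - exp (-(a * r ^ (-γ)))) * r) (Ioi 0) := by
  have hmeas : AEStronglyMeasurable (fun r : ℝ => (1 - exp (-(a * r ^ (-γ)))) * r) volume := by
    apply Measurable.aestronglyMeasurable; fun_prop
  have hnorm : ∀ r : ℝ, 0 < r →
      ‖(1 - exp (-(a * r ^ (-γ)))) * r‖ ≤ min r (a * r ^ (1 - γ)) := by
    intro r hr
    have hmin := one_sub_exp_neg_le_min (a * r ^ (-γ))
    rw [norm_mul, Real.norm_of_nonneg (one_sub_exp_neg_nonneg (by positivity)),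
      Real.norm_of_nonneg hr.le, rpow_sub hr, rpow_one, div_eq_mul_inv, ← rpow_neg hr.le]
    refine le_min ?_ ?_ <;> nlinarith [min_le_left 1 (a * r ^ (-γ)), min_le_right 1 (a * r ^ (-γ))]
  rw [← Ioc_union_Ioi_eq_Ioi zero_le_one]
  refine IntegrableOn.union ?_ ?_
  · refine Measure.integrableOn_of_bounded (M := 1) (by simp) hmeas ?_
    filter_upwards [ae_restrict_mem measurableSet_Ioc] with r ⟨hr0, hr1⟩
    exact (hnorm r hr0).trans ((min_le_left _ _).trans hr1)
  · have hdecay := (integrableOn_Ioi_rpow_of_lt (a := 1 - γ) (by linarith) one_pos).const_mul a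
    refine hdecay.mono' hmeas.restrict ?_
    filter_upwards [ae_restrict_mem measurableSet_Ioi] with r (hr : 1 < r)
    exact (hnorm r (one_pos.trans hr)).trans (min_le_right _ _)

theorem tendsto_one_sub_exp_neg_mul_rpow_neg_mul_sq_nhdsGT_zero (ha : 0 ≤ a) :
    Tendsto (fun r : ℝ => (1 - exp (-(a * r ^ (-γ)))) * (r ^ 2 / 2)) (𝓝[>] 0) (𝓝 0) := by
  have hsq : Tendsto (fun r : ℝ => r ^ 2 / 2) (𝓝[>] 0) (𝓝 0) :=
    tendsto_nhdsWithin_of_tendsto_nhds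
      (by simpa using ((continuous_pow 2).div_const (2 : ℝ)).tendsto 0)
  refine squeeze_zero' ?_ ?_ hsq <;> filter_upwards [self_mem_nhdsWithin] with r (hr : 0 < r)
  · exact mul_nonneg (one_sub_exp_neg_nonneg (by positivity)) (by positivity)
  · exact mul_le_of_le_one_left (by positivity)
      ((one_sub_exp_neg_le_min _).trans (min_le_left _ _))

theorem tendsto_one_sub_exp_neg_mul_rpow_neg_mul_sq_atTop (hγ : 2 < γ) (ha : 0 ≤ a) :
    Tendsto (fun r : ℝ => (1 - exp (-(a * r ^ (-γ)))) * (r ^ 2 / 2)) atTop (𝓝 0) := by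
  have hdecay : Tendsto (fun r : ℝ => a / 2 * r ^ (-(γ - 2))) atTop (𝓝 0) := by
    simpa using (tendsto_rpow_neg_atTop (by linarith : 0 < γ - 2)).const_mul (a / 2)
  refine squeeze_zero' ?_ ?_ hdecay <;> filter_upwards [eventually_gt_atTop 0] with r hr
  · exact mul_nonneg (one_sub_exp_neg_nonneg (by positivity)) (by positivity)
  · calc (1 - exp (-(a * r ^ (-γ)))) * (r ^ 2 / 2)
        ≤ a * r ^ (-γ) * (r ^ 2 / 2) :=
          mul_le_mul_of_nonneg_right ((one_sub_exp_neg_le_min _).trans (min_le_right _ _))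
            (by positivity)
      _ = a / 2 * r ^ (-(γ - 2)) := by
          rw [neg_sub, rpow_sub hr, rpow_two, rpow_neg hr.le]; ring

theorem integral_one_sub_exp_neg_mul_rpow_neg_mul_self (hγ : 2 < γ) (ha : 0 < a) :
    ∫ r in Ioi (0 : ℝ), (1 - exp (-(a * r ^ (-γ)))) * r
      = Gamma (1 - 2 / γ) / 2 * a ^ (2 / γ) := by
  obtain ⟨hint, hval⟩ := integrableOn_and_integral_rpow_mul_exp_neg_mul_rpow_neg (p := γ)
    (q := 1 - γ) (by linarith) (by linarith) ha
  have hu'v : ∀ r ∈ Ioi (0 : ℝ), -(a * γ * r ^ (-γ - 1) * exp (-(a * r ^ (-γ)))) * (r ^ 2 / 2)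
      = -(a * γ / 2) * (r ^ (1 - γ) * exp (-(a * r ^ (-γ)))) := by
    intro r (hr : 0 < r)
    rw [show 1 - γ = (-γ - 1) + 2 by ring, rpow_add hr, rpow_two]; ring
  have hparts := integral_Ioi_mul_deriv_eq_deriv_mul
    (fun r hr => hasDerivAt_one_sub_exp_neg_mul_rpow_neg hr)
    (fun r _ => by simpa using (hasDerivAt_pow 2 r).div_const 2)
    (integrableOn_one_sub_exp_neg_mul_rpow_neg_mul_self_s4 hγ ha.le)
    (IntegrableOn.congr_fun (hint.const_mul _) (fun r hr => (hu'v r hr).symm) measurableSet_Ioi)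
    (tendsto_one_sub_exp_neg_mul_rpow_neg_mul_sq_nhdsGT_zero ha.le)
    (tendsto_one_sub_exp_neg_mul_rpow_neg_mul_sq_atTop hγ ha.le)
  rw [hparts, setIntegral_congr_fun measurableSet_Ioi hu'v, integral_const_mul, hval,
    show 1 - 2 / γ = -(1 - γ + 1) / γ by field_simp; ring]
  have hexp : a * a ^ ((1 - γ + 1) / γ) = a ^ (2 / γ) := by
    rw [show 2 / γ = 1 + (1 - γ + 1) / γ by field_simp; ring, rpow_add ha, rpow_one]
  rw [← hexp]
  field_simp
  ring

end

theorem integrableOn_exp_neg_mul_rpow {p b : ℝ} (hp : 0 < p) (hb : 0 < b) :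
    IntegrableOn (fun x : ℝ => exp (-b * x ^ p)) (Ioi 0) := by
  simpa using integrableOn_rpow_mul_exp_neg_mul_rpow (s := 0) neg_one_lt_zero hp hb

theorem wideband_CRB_closed_form_general (γ We c lam ρ : ℝ)
    (hγ : 2 < γ) (hWe : 0 < We) (hc : 0 < c) (hlam : 0 < lam)
    (U : ℝ → ℝ)
    (hU : ∀ s > 0, U s = ∫ r in Set.Ioi (0 : ℝ),
      (1 - Real.exp (-(4 * s * We * r ^ (-γ) / c ^ 2))) * r) :
    IntegrableOn (fun s : ℝ => Real.exp (-(2 * π * lam * U s))) (Set.Ioi 0) ∧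
    (4 / ρ) * ∫ s in Set.Ioi (0 : ℝ), Real.exp (-(2 * π * lam * U s))
      = c ^ 2 / (ρ * We) * (π * lam) ^ (-(γ / 2))
          * Real.Gamma (1 - 2 / γ) ^ (-(γ / 2)) * Real.Gamma (1 + γ / 2) := by
  have hγ0 : 0 < γ := by linarith
  have hΓ : 0 < Gamma (1 - 2 / γ) := Gamma_pos_of_pos (by rw [sub_pos, div_lt_one hγ0]; exact hγ)
  set κ := 4 * We / c ^ 2 with hκ
  have hκ0 : 0 < κ := by positivity
  set b := π * lam * Gamma (1 - 2 / γ) * κ ^ (2 / γ) with hb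
  have hb0 : 0 < b := by positivity
  have hU' : ∀ s ∈ Ioi (0 : ℝ), exp (-(2 * π * lam * U s)) = exp (-b * s ^ (2 / γ)) := by
    intro s (hs : 0 < s)
    have hUs : U s = ∫ r in Ioi (0 : ℝ), (1 - exp (-(κ * s * r ^ (-γ)))) * r := by
      rw [hU s hs]; congr! 5; ring
    rw [hUs, integral_one_sub_exp_neg_mul_rpow_neg_mul_self hγ (by positivity),
      mul_rpow hκ0.le hs.le, hb]
    ring_nf
  have hbpow :
      b ^ (-(γ / 2)) = (π * lam) ^ (-(γ / 2)) * Gamma (1 - 2 / γ) ^ (-(γ / 2)) / κ := by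
    rw [hb, mul_rpow (by positivity) (by positivity), mul_rpow (by positivity) hΓ.le,
      ← rpow_mul hκ0.le, show 2 / γ * -(γ / 2) = -1 by field_simp, rpow_neg_one]
    ring
  refine ⟨(integrableOn_exp_neg_mul_rpow (by positivity) hb0).congr_fun
    (fun s hs => (hU' s hs).symm) measurableSet_Ioi, ?_⟩
  rw [setIntegral_congr_fun measurableSet_Ioi hU', integral_exp_neg_mul_rpow (by positivity) hb0,
    show -1 / (2 / γ) = -(γ / 2) by field_simp,
    show 1 / (2 / γ) + 1 = 1 + γ / 2 by field_simp; ring, hbpow, hκ]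
  field_simp

/-- With `U(s) = ∫₀^∞ (1 − exp(−4·s·W_e·r^{−γ}/c²))·r dr`, the integral
`(4/ρ)·∫₀^∞ exp(−2πλ·U(s)) ds` converges and equals
`CRB_LB,W = (c²/(ρ·W_e))·(πλ)^{−γ/2}·Γ(1 − 2/γ)^{−γ/2}·Γ(1 + γ/2)`. -/
theorem wideband_CRB_closed_form (γ We c lam ρ : ℝ)
    (hγ : 2 < γ) (hWe : 0 < We) (hc : 0 < c) (hlam : 0 < lam) (hρ : 0 < ρ)
    (U : ℝ → ℝ)
    (hU : ∀ s > 0, U s = ∫ r in Set.Ioi (0 : ℝ),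
      (1 - Real.exp (-(4 * s * We * r ^ (-γ) / c ^ 2))) * r) :
    IntegrableOn (fun s : ℝ => Real.exp (-(2 * π * lam * U s))) (Set.Ioi 0) ∧
    (4 / ρ) * ∫ s in Set.Ioi (0 : ℝ), Real.exp (-(2 * π * lam * U s))
      = c ^ 2 / (ρ * We) * (π * lam) ^ (-(γ / 2))
          * Real.Gamma (1 - 2 / γ) ^ (-(γ / 2)) * Real.Gamma (1 + γ / 2) :=
  wideband_CRB_closed_form_general γ We c lam ρ hγ hWe hc hlam U hU
end
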